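/- arXiv:1108.5342 — 4 statements merged into one kernel-verified Lean document; each statement's English description precedes it below -/
import Mathlib

section
/- Let $q \geq 3$, let $r$ be an integer with $2 \leq r \leq \phi(q)/4$, let $a_1,\dots,a_r$ be distinct residues mod $q$ coprime to $q$, and let $t \in \mathbb{R}^r$ be nonzero. Then the number of non-principal Dirichlet characters $\chi$ mod $q$ satisfying $|\sum_{j=1}^r \chi(a_j) t_j| \geq \|t\|/2$ is at least $\phi(q)/(2r)$, where $\|t\|$ is the Euclidean norm. -/
/-!
Put `S(χ) = ∑ⱼ χ(aⱼ) tⱼ`. Orthogonality of characters gives `∑_χ |S(χ)|² = φ(q) ‖t‖²`, while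
Cauchy–Schwarz bounds every single term by `r ‖t‖²`. The principal character and the
non-principal characters with `|S(χ)| < ‖t‖/2` contribute at most `r ‖t‖² + φ(q) ‖t‖²/4`, so the
`N` remaining characters carry at least `(3/4) φ(q) ‖t‖² - r ‖t‖² ≥ φ(q) ‖t‖²/2`, whence
`N r ≥ φ(q)/2`.
-/

open Finset ComplexConjugate

theorem Finset.sum_le_mul_card_filter_le_add_mul_card {X : Type*} (s : Finset X) (f : X → ℝ)
    {M θ : ℝ} (hM : ∀ x ∈ s, f x ≤ M) (hθ : 0 ≤ θ) :
    ∑ x ∈ s, f x ≤ M * #{x ∈ s | θ ≤ f x} + θ * #s := by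
  classical
  rw [← sum_filter_add_sum_filter_not s (θ ≤ f ·)]
  gcongr ?_ + ?_
  · calc ∑ x ∈ s with θ ≤ f x, f x ≤ #{x ∈ s | θ ≤ f x} • M :=
          sum_le_card_nsmul _ _ _ fun x hx => hM x (mem_filter.1 hx).1
      _ = M * #{x ∈ s | θ ≤ f x} := by rw [nsmul_eq_mul, mul_comm]
  · calc ∑ x ∈ s with ¬θ ≤ f x, f x ≤ #{x ∈ s | ¬θ ≤ f x} • θ :=
          sum_le_card_nsmul _ _ _ fun x hx => (not_le.1 (mem_filter.1 hx).2).le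
      _ ≤ θ * #s := by rw [nsmul_eq_mul, mul_comm]; gcongr; exact filter_subset _ _

theorem Fintype.sum_le_mul_card_filter_ne_le_add_mul_card {X : Type*} [Fintype X]
    [DecidableEq X] (x₀ : X) (f : X → ℝ) {M θ : ℝ} (hM : ∀ x, f x ≤ M) (hθ : 0 ≤ θ) :
    ∑ x, f x ≤ M * (#{x | x ≠ x₀ ∧ θ ≤ f x} + 1) + θ * Fintype.card X := by
  have hrest := (univ.erase x₀).sum_le_mul_card_filter_le_add_mul_card f (fun x _ => hM x) hθ
  rw [← filter_ne', filter_filter] at hrest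
  have hcard : (#(univ.filter (· ≠ x₀)) : ℝ) ≤ Fintype.card X := by
    exact_mod_cast card_le_univ _
  rw [← add_sum_erase _ _ (mem_univ x₀), ← filter_ne']
  nlinarith [hM x₀]

namespace DirichletCharacter

variable {q : ℕ} {ι : Type*} [Fintype ι]

theorem conj_apply_of_isUnit (χ : DirichletCharacter ℂ q) {a : ZMod q} (ha : IsUnit a) :
    conj (χ a) = χ a⁻¹ := by
  obtain ⟨u, rfl⟩ := ha
  rw [← Complex.star_def, MulChar.star_apply', MulChar.inv_apply, Ring.inverse_unit,
    ZMod.inv_coe_unit]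

theorem norm_sum_mul_sq_le (χ : DirichletCharacter ℂ q) (a : ι → ZMod q) (c : ι → ℂ) :
    ‖∑ j, χ (a j) * c j‖ ^ 2 ≤ Fintype.card ι * ∑ j, ‖c j‖ ^ 2 := by
  have hsum : ‖∑ j, χ (a j) * c j‖ ≤ ∑ j, ‖c j‖ := by
    refine (norm_sum_le _ _).trans (sum_le_sum fun j _ => ?_)
    rw [norm_mul]
    exact mul_le_of_le_one_left (norm_nonneg _) (χ.norm_le_one _)
  calc ‖∑ j, χ (a j) * c j‖ ^ 2 ≤ (∑ j, ‖c j‖) ^ 2 := by gcongr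
    _ ≤ Fintype.card ι * ∑ j, ‖c j‖ ^ 2 := sq_sum_le_card_mul_sum_sq

theorem sum_norm_sum_mul_sq [NeZero q] {a : ι → ZMod q} (ha_inj : Function.Injective a)
    (ha_unit : ∀ j, IsUnit (a j)) (c : ι → ℂ) :
    ∑ χ : DirichletCharacter ℂ q, ‖∑ j, χ (a j) * c j‖ ^ 2 = q.totient * ∑ j, ‖c j‖ ^ 2 := by
  classical
  apply Complex.ofReal_injective
  push_cast
  simp_rw [← Complex.mul_conj', map_sum, map_mul, mul_sum, sum_mul]
  calc ∑ χ : DirichletCharacter ℂ q, ∑ k, ∑ j, χ (a j) * c j * (conj (χ (a k)) * conj (c k))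
      = ∑ k, ∑ j, c j * conj (c k) * ∑ χ : DirichletCharacter ℂ q, χ (a k)⁻¹ * χ (a j) := by
        rw [sum_comm]
        refine sum_congr rfl fun k _ => ?_
        rw [sum_comm]
        refine sum_congr rfl fun j _ => ?_
        rw [mul_sum]
        refine sum_congr rfl fun χ _ => ?_
        rw [χ.conj_apply_of_isUnit (ha_unit k)]
        ring
    _ = ∑ k, ∑ j, c j * conj (c k) * if a k = a j then (q.totient : ℂ) else 0 := by
        simp only [sum_char_inv_mul_char_eq ℂ (ha_unit _)]
    _ = ∑ k, q.totient * (c k * conj (c k)) := by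
        simp [ha_inj.eq_iff, mul_comm]

end DirichletCharacter

theorem stmt0_general (q : ℕ) (r : ℕ)
    (hr : (r : ℝ) ≤ (Nat.totient q : ℝ) / 4)
    (a : Fin r → ZMod q) (ha_inj : Function.Injective a)
    (ha_unit : ∀ j, IsUnit (a j))
    (t : EuclideanSpace ℝ (Fin r)) (ht : t ≠ 0) :
    (Nat.totient q : ℝ) / (2 * r) ≤
      Nat.card {χ : DirichletCharacter ℂ q //
        χ ≠ 1 ∧ ‖t‖ / 2 ≤ ‖∑ j, χ (a j) * (t j : ℂ)‖} := by
  have hr0 : 0 < r := Nat.pos_of_ne_zero (by rintro rfl; exact ht (Subsingleton.elim _ _))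
  have : NeZero q := ⟨by rintro rfl; simp at hr; omega⟩
  have ht2 : 0 < ‖t‖ ^ 2 := by have := norm_pos_iff.2 ht; positivity
  set f : DirichletCharacter ℂ q → ℝ := fun χ => ‖∑ j, χ (a j) * (t j : ℂ)‖ ^ 2
  have hparseval : ∑ χ, f χ = q.totient * ‖t‖ ^ 2 := by
    simpa [EuclideanSpace.norm_sq_eq] using
      DirichletCharacter.sum_norm_sum_mul_sq ha_inj ha_unit (fun j => (t j : ℂ))
  have hbound : ∀ χ, f χ ≤ r * ‖t‖ ^ 2 := fun χ => by
    simpa [EuclideanSpace.norm_sq_eq] using χ.norm_sum_mul_sq_le a (fun j => (t j : ℂ))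
  have hcard : Nat.card {χ : DirichletCharacter ℂ q //
      χ ≠ 1 ∧ ‖t‖ / 2 ≤ ‖∑ j, χ (a j) * (t j : ℂ)‖} =
      #{χ | χ ≠ 1 ∧ (‖t‖ / 2) ^ 2 ≤ f χ} := by
    rw [Nat.card_eq_fintype_card, Fintype.card_subtype]
    congr! 3 with χ
    exact (pow_le_pow_iff_left₀ (by positivity) (norm_nonneg _) two_ne_zero).symm
  have hcount := Fintype.sum_le_mul_card_filter_ne_le_add_mul_card 1 f hbound
    (by positivity : 0 ≤ (‖t‖ / 2) ^ 2)
  rw [hparseval, ← hcard, ← Nat.card_eq_fintype_card,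
    DirichletCharacter.card_eq_totient_of_hasEnoughRootsOfUnity] at hcount
  rw [div_le_iff₀ (by positivity)]
  nlinarith

/-- Let `q ≥ 3`, let `r` be an integer with `2 ≤ r ≤ φ(q)/4`, let
`a 1, …, a r` be distinct residues mod `q` coprime to `q`, and let `t ∈ ℝ^r` be nonzero.
Then the number of non-principal Dirichlet characters `χ` mod `q` with
`|∑ j, χ (a j) * t j| ≥ ‖t‖/2` is at least `φ(q)/(2r)`. -/
theorem stmt0 (q : ℕ) (hq : 3 ≤ q) (r : ℕ) (hr2 : 2 ≤ r)
    (hr : (r : ℝ) ≤ (Nat.totient q : ℝ) / 4)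
    (a : Fin r → ZMod q) (ha_inj : Function.Injective a)
    (ha_unit : ∀ j, IsUnit (a j))
    (t : EuclideanSpace ℝ (Fin r)) (ht : t ≠ 0) :
    (Nat.totient q : ℝ) / (2 * r) ≤
      Nat.card {χ : DirichletCharacter ℂ q //
        χ ≠ 1 ∧ ‖t‖ / 2 ≤ ‖∑ j, χ (a j) * (t j : ℂ)‖} :=
  stmt0_general q r hr a ha_inj ha_unit t ht
end

section
/- Let $r \geq 2$ and $0 < \epsilon \leq 1/(2r)$. If $A$ is a real symmetric $r \times r$ matrix with $a_{jj} = 1$ for all $j$ and $|a_{jk}| \leq \epsilon$ for all $j \neq k$, then $|\det(A) - 1| \leq C \epsilon^2 r^2$ for some absolute constant $C$ (one may take $C = 2$). -/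
/-! By the Leibniz formula, `det A - 1` is the sum of the terms of the permutations `σ ≠ 1`.
Such a `σ` moves `k ≥ 2` points, its term is bounded by `ε ^ k`, and at most
`r (r - 1) ⋯ (r - k + 1) ≤ r ^ k` permutations move exactly `k` points (each is a permutation
of its `k`-element support). Hence `|det A - 1| ≤ ∑_{k ≥ 2} (r ε) ^ k ≤ 2 (r ε) ^ 2`, the
geometric series converging because `r ε ≤ 1 / 2`.
-/

open Finset Equiv Nat

theorem sum_Ico_two_pow_le_two_mul_sq {K : Type*} [Field K] [LinearOrder K]
    [IsStrictOrderedRing K] {x : K} (hx0 : 0 ≤ x) (hx : x ≤ 1 / 2) (n : ℕ) :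
    ∑ k ∈ Ico 2 n, x ^ k ≤ 2 * x ^ 2 :=
  calc ∑ k ∈ Ico 2 n, x ^ k ≤ x ^ 2 / (1 - x) := geom_sum_Ico_le_of_lt_one hx0 (by linarith)
    _ ≤ 2 * x ^ 2 := by
      rw [div_le_iff₀ (by linarith)]
      nlinarith [sq_nonneg x]

namespace Equiv.Perm

variable {α : Type*} [Fintype α] [DecidableEq α]

theorem card_filter_support_eq_le (S : Finset α) :
    #{σ : Perm α | σ.support = S} ≤ (#S)! := by
  calc #{σ : Perm α | σ.support = S}
      ≤ #(univ.image (ofSubtype : Perm S → Perm α)) := card_le_card fun σ hσ => by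
        obtain ⟨τ, hτ⟩ := (mem_range_ofSubtype_iff (p := (· ∈ S))).mpr
          (by rw [(mem_filter.mp hσ).2]; exact fun x hx => hx)
        exact mem_image.mpr ⟨τ, mem_univ _, hτ⟩
    _ ≤ #(univ : Finset (Perm S)) := card_image_le
    _ = (#S)! := by simp [Fintype.card_perm]

theorem card_filter_card_support_eq_le (k : ℕ) :
    #{σ : Perm α | #σ.support = k} ≤ (Fintype.card α).descFactorial k := by
  have hcover : ({σ : Perm α | #σ.support = k} : Finset _)
      = (powersetCard k univ).biUnion fun S => {σ : Perm α | σ.support = S} := by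
    ext σ
    simp
  calc #{σ : Perm α | #σ.support = k}
      ≤ #(powersetCard k (univ : Finset α)) * k ! := by
        rw [hcover]
        refine card_biUnion_le_card_mul _ _ _ fun S hS => ?_
        rw [← (mem_powersetCard.mp hS).2]
        exact card_filter_support_eq_le S
    _ = (Fintype.card α).descFactorial k := by
        rw [card_powersetCard, Finset.card_univ, descFactorial_eq_factorial_mul_choose, mul_comm]

theorem sum_ne_one_pow_card_support_le {K : Type*} [Field K] [LinearOrder K]
    [IsStrictOrderedRing K] {x : K} (hx0 : 0 ≤ x)
    (hx : Fintype.card α * x ≤ 1 / 2) :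
    ∑ σ ∈ univ.erase (1 : Perm α), x ^ #σ.support ≤ 2 * (Fintype.card α * x) ^ 2 := by
  set n := Fintype.card α
  have hmaps : ∀ σ ∈ univ.erase (1 : Perm α), #σ.support ∈ Ico 2 (n + 1) := fun σ hσ =>
    mem_Ico.mpr ⟨one_lt_card_support_of_ne_one (ne_of_mem_erase hσ),
      Nat.lt_succ_of_le (card_le_univ _)⟩
  calc ∑ σ ∈ univ.erase (1 : Perm α), x ^ #σ.support
      = ∑ k ∈ Ico 2 (n + 1), #{σ ∈ univ.erase (1 : Perm α) | #σ.support = k} * x ^ k := by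
        rw [← sum_fiberwise_of_maps_to hmaps]
        refine sum_congr rfl fun k _ => ?_
        rw [sum_congr rfl fun σ hσ => by rw [(mem_filter.mp hσ).2], sum_const, nsmul_eq_mul]
    _ ≤ ∑ k ∈ Ico 2 (n + 1), (n * x) ^ k := by
        refine sum_le_sum fun k _ => ?_
        rw [mul_pow]
        gcongr
        calc (#{σ ∈ univ.erase (1 : Perm α) | #σ.support = k} : K)
            ≤ #{σ : Perm α | #σ.support = k} :=
              Nat.cast_le.mpr (card_le_card (filter_subset_filter _ (erase_subset _ _)))
          _ ≤ n.descFactorial k := Nat.cast_le.mpr (card_filter_card_support_eq_le k)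
          _ ≤ (n : K) ^ k := by exact_mod_cast Nat.descFactorial_le_pow n k
    _ ≤ 2 * (n * x) ^ 2 := sum_Ico_two_pow_le_two_mul_sq (by positivity) hx _

end Equiv.Perm

namespace Matrix

variable {n R : Type*} [Fintype n] [DecidableEq n] [CommRing R]

theorem det_sub_one_eq_sum_erase_one {A : Matrix n n R} (hdiag : ∀ i, A i i = 1) :
    A.det - 1 = ∑ σ ∈ univ.erase (1 : Perm n), Perm.sign σ • ∏ i, A (σ i) i := by
  rw [sum_erase_eq_sub (mem_univ 1), det_apply]
  simp [hdiag]

variable [LinearOrder R] [IsStrictOrderedRing R]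

theorem abs_prod_apply_perm_le {A : Matrix n n R} {ε : R} (hdiag : ∀ i, A i i = 1)
    (hoff : ∀ j k, j ≠ k → |A j k| ≤ ε) (σ : Perm n) :
    |∏ i, A (σ i) i| ≤ ε ^ #σ.support :=
  calc |∏ i, A (σ i) i| = ∏ i, |A (σ i) i| := abs_prod _ _
    _ ≤ ∏ i, if i ∈ σ.support then ε else 1 := by
        refine prod_le_prod (fun _ _ => abs_nonneg _) fun i _ => ?_
        split_ifs with hi
        · exact hoff _ _ (Perm.mem_support.mp hi)
        · rw [Perm.notMem_support.mp hi, hdiag, abs_one]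
    _ = ε ^ #σ.support := by rw [prod_ite_mem, univ_inter, prod_const]

theorem abs_det_sub_one_le_sum {A : Matrix n n R} {ε : R} (hdiag : ∀ i, A i i = 1)
    (hoff : ∀ j k, j ≠ k → |A j k| ≤ ε) :
    |A.det - 1| ≤ ∑ σ ∈ univ.erase (1 : Perm n), ε ^ #σ.support := by
  rw [det_sub_one_eq_sum_erase_one hdiag]
  refine (abs_sum_le_sum_abs _ _).trans (sum_le_sum fun σ _ => ?_)
  rw [Units.smul_def, abs_zsmul, Perm.sign_abs, one_smul]
  exact abs_prod_apply_perm_le hdiag hoff σ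

end Matrix

theorem stmt2_general (r : ℕ) (ε : ℝ) (hε0 : 0 < ε) (hε : ε ≤ 1 / (2 * r))
    (A : Matrix (Fin r) (Fin r) ℝ)
    (hdiag : ∀ j, A j j = 1) (hoff : ∀ j k, j ≠ k → |A j k| ≤ ε) :
    |A.det - 1| ≤ 2 * ε ^ 2 * r ^ 2 := by
  have hrε : Fintype.card (Fin r) * ε ≤ 1 / 2 := by
    rcases r.eq_zero_or_pos with rfl | hr
    · norm_num
    · rw [Fintype.card_fin, ← le_div_iff₀' (by positivity), div_div]
      exact hε
  calc |A.det - 1| ≤ ∑ σ ∈ univ.erase (1 : Perm (Fin r)), ε ^ #σ.support :=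
        A.abs_det_sub_one_le_sum hdiag hoff
    _ ≤ 2 * (Fintype.card (Fin r) * ε) ^ 2 := Perm.sum_ne_one_pow_card_support_le hε0.le hrε
    _ = 2 * ε ^ 2 * r ^ 2 := by rw [Fintype.card_fin]; ring

/-- Let `r ≥ 2` and `0 < ε ≤ 1/(2r)`. If `A` is a real symmetric `r × r`
matrix with unit diagonal and off-diagonal entries of absolute value at most `ε`, then
`|det A - 1| ≤ 2 ε² r²`. -/
theorem stmt2 (r : ℕ) (hr : 2 ≤ r) (ε : ℝ) (hε0 : 0 < ε) (hε : ε ≤ 1 / (2 * r))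
    (A : Matrix (Fin r) (Fin r) ℝ) (hsymm : A.IsSymm)
    (hdiag : ∀ j, A j j = 1) (hoff : ∀ j k, j ≠ k → |A j k| ≤ ε) :
    |A.det - 1| ≤ 2 * ε ^ 2 * r ^ 2 :=
  stmt2_general r ε hε0 hε A hdiag hoff
end

section
/- Let $r \geq 2$, $0 < \epsilon \leq 1/(2r)$, and let $A$ be a real symmetric $r \times r$ matrix with $a_{jj}=1$ and $|a_{jk}| \leq \epsilon$ for $j \neq k$. Then $A$ is invertible, and the entries $\tilde{a}_{jk}$ of $A^{-1}$ satisfy $|\tilde{a}_{jj} - 1| \leq C\epsilon^2 r^2$ for all $j$, and $|\tilde{a}_{jk}| \leq C\epsilon$ for all $j \neq k$, for some absolute constant $C$. -/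
/-!
Since `r ε ≤ 1/2`, `A` is strictly diagonally dominant, hence invertible (Gershgorin). A row `x` of `A⁻¹`
satisfies `x ᵥ* A = e_j`, i.e. `x k = δ_jk - ∑_{l ≠ k} x l A l k`, so every entry differs from
`δ_jk` by at most `ε ∑_{l ≠ k} |x l|`. Comparing with the largest entry gives
`|x k| ≤ 1 + (1/2) max |x|`, hence `|x k| ≤ 2`; comparing with the largest off-diagonal entry gives
`|x k| ≤ 2ε + (1/2) max_{l ≠ j} |x l|`, hence `|x k| ≤ 4ε` for `k ≠ j`; then `|x j - 1| ≤ ε · r · 4ε`.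
-/

open Finset Matrix

lemma le_div_one_sub_of_forall_le_add_mul {ι : Type*} {s : Finset ι} {f : ι → ℝ} {a c : ℝ}
    (hc : c < 1) (h : ∀ M, (∀ l ∈ s, f l ≤ M) → ∀ k ∈ s, f k ≤ a + c * M) :
    ∀ k ∈ s, f k ≤ a / (1 - c) := by
  intro k hk
  obtain ⟨m, hm, hmax⟩ := s.exists_max_image f ⟨k, hk⟩
  have hfm : f m ≤ a + c * f m := h (f m) hmax m hm
  rw [le_div_iff₀ (by linarith)]
  nlinarith [hmax k hk]

section UnitDiagonal

variable {n : Type*} [Fintype n] [DecidableEq n] {A : Matrix n n ℝ} {ε : ℝ}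

omit [DecidableEq n] in
lemma sum_le_card_mul_of_le {s : Finset n} {f : n → ℝ} {M : ℝ} (hM : 0 ≤ M)
    (h : ∀ l ∈ s, f l ≤ M) : ∑ l ∈ s, f l ≤ Fintype.card n * M := by
  calc ∑ l ∈ s, f l ≤ s.card * M := by simpa using sum_le_card_nsmul s f M h
    _ ≤ Fintype.card n * M := by gcongr; exact_mod_cast card_le_univ s

variable (hdiag : ∀ i, A i i = 1) (hoff : ∀ i k, i ≠ k → |A i k| ≤ ε)
include hdiag hoff

lemma det_ne_zero_of_unit_diag (hε0 : 0 ≤ ε) (hε : Fintype.card n * ε < 1) : A.det ≠ 0 := by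
  refine det_ne_zero_of_sum_row_lt_diag fun k => ?_
  have hsum : ∑ l ∈ univ.erase k, |A k l| ≤ Fintype.card n * ε :=
    sum_le_card_mul_of_le hε0 fun l hl => hoff k l (ne_of_mem_erase hl).symm
  simpa [Real.norm_eq_abs, hdiag k] using hsum.trans_lt hε

lemma abs_vecMul_apply_sub_le (x : n → ℝ) (k : n) :
    |(x ᵥ* A) k - x k| ≤ ε * ∑ l ∈ univ.erase k, |x l| := by
  have hsplit : (x ᵥ* A) k - x k = ∑ l ∈ univ.erase k, x l * A l k := by
    rw [vecMul, dotProduct, ← add_sum_erase _ _ (mem_univ k), hdiag k, mul_one, add_sub_cancel_left]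
  rw [hsplit, mul_sum]
  refine (abs_sum_le_sum_abs _ _).trans (sum_le_sum fun l hl => ?_)
  rw [abs_mul, mul_comm]
  exact mul_le_mul_of_nonneg_right (hoff l k (ne_of_mem_erase hl)) (abs_nonneg _)

variable {x : n → ℝ} {j : n} (hx : x ᵥ* A = Pi.single j 1)
  (hε0 : 0 ≤ ε) (hε : Fintype.card n * ε ≤ 1 / 2)
include hx hε0 hε

lemma abs_le_two_of_vecMul_eq_single (k : n) : |x k| ≤ 2 := by
  have hbound := le_div_one_sub_of_forall_le_add_mul (s := univ) (f := fun l => |x l|)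
    (a := 1) (c := 1 / 2) (by norm_num) ?_ k (mem_univ k)
  · norm_num at hbound
    exact hbound
  intro M hM k _
  have hM0 : 0 ≤ M := (abs_nonneg _).trans (hM k (mem_univ k))
  have hsum : ∑ l ∈ univ.erase k, |x l| ≤ Fintype.card n * M :=
    sum_le_card_mul_of_le hM0 fun l _ => hM l (mem_univ l)
  have hdev := abs_vecMul_apply_sub_le hdiag hoff x k
  have hsingle : |(Pi.single j 1 : n → ℝ) k| ≤ 1 := by
    rw [Pi.single_apply]; split_ifs <;> simp
  rw [hx] at hdev
  calc |x k| ≤ |(Pi.single j 1 : n → ℝ) k| + |(Pi.single j 1 : n → ℝ) k - x k| := by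
        linarith [abs_sub_abs_le_abs_sub (x k) ((Pi.single j 1 : n → ℝ) k),
          abs_sub_comm (x k) ((Pi.single j 1 : n → ℝ) k)]
    _ ≤ 1 + ε * (Fintype.card n * M) := by gcongr; exact hdev.trans (by gcongr)
    _ = 1 + (Fintype.card n * ε) * M := by ring
    _ ≤ 1 + 1 / 2 * M := by gcongr

lemma abs_le_four_mul_of_vecMul_eq_single {k : n} (hk : k ≠ j) : |x k| ≤ 4 * ε := by
  have hbound := le_div_one_sub_of_forall_le_add_mul (s := univ.erase j) (f := fun l => |x l|)
    (a := 2 * ε) (c := 1 / 2) (by norm_num) ?_ k (mem_erase.2 ⟨hk, mem_univ k⟩)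
  · norm_num at hbound
    linarith
  intro M hM k hk
  have hM0 : 0 ≤ M := (abs_nonneg _).trans (hM k hk)
  have hsum : ∑ l ∈ univ.erase k, |x l| ≤ 2 + Fintype.card n * M :=
    calc ∑ l ∈ univ.erase k, |x l| ≤ ∑ l, |x l| :=
          sum_le_sum_of_subset_of_nonneg (erase_subset k univ) fun l _ _ => abs_nonneg _
      _ = |x j| + ∑ l ∈ univ.erase j, |x l| := (add_sum_erase _ _ (mem_univ j)).symm
      _ ≤ 2 + Fintype.card n * M := add_le_add
          (abs_le_two_of_vecMul_eq_single hdiag hoff hx hε0 hε j) (sum_le_card_mul_of_le hM0 hM)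
  have hdev := abs_vecMul_apply_sub_le hdiag hoff x k
  rw [hx, Pi.single_eq_of_ne (ne_of_mem_erase hk), zero_sub, abs_neg] at hdev
  calc |x k| ≤ ε * (2 + Fintype.card n * M) := hdev.trans (by gcongr)
    _ = 2 * ε + (Fintype.card n * ε) * M := by ring
    _ ≤ 2 * ε + 1 / 2 * M := by gcongr

lemma abs_sub_one_le_of_vecMul_eq_single : |x j - 1| ≤ 4 * ε ^ 2 * Fintype.card n := by
  have hdev := abs_vecMul_apply_sub_le hdiag hoff x j
  rw [hx, Pi.single_eq_same, abs_sub_comm] at hdev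
  have hsum : ∑ l ∈ univ.erase j, |x l| ≤ Fintype.card n * (4 * ε) :=
    sum_le_card_mul_of_le (by positivity) fun l hl =>
      abs_le_four_mul_of_vecMul_eq_single hdiag hoff hx hε0 hε (ne_of_mem_erase hl)
  calc |x j - 1| ≤ ε * (Fintype.card n * (4 * ε)) := hdev.trans (by gcongr)
    _ = 4 * ε ^ 2 * Fintype.card n := by ring

end UnitDiagonal

/-- There is an absolute constant `C > 0` such that: for `r ≥ 2`,
`0 < ε ≤ 1/(2r)` and `A` a real symmetric `r × r` matrix with unit diagonal and off-diagonal
entries bounded by `ε`, the matrix `A` is invertible and the entries of `A⁻¹` satisfy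
`|A⁻¹ j j - 1| ≤ C ε² r²` and `|A⁻¹ j k| ≤ C ε` for `j ≠ k`. -/
theorem stmt4 :
    ∃ C : ℝ, 0 < C ∧
      ∀ (r : ℕ), 2 ≤ r → ∀ (ε : ℝ), 0 < ε → ε ≤ 1 / (2 * r) →
        ∀ (A : Matrix (Fin r) (Fin r) ℝ), A.IsSymm →
          (∀ j, A j j = 1) → (∀ j k, j ≠ k → |A j k| ≤ ε) →
          IsUnit A ∧
          (∀ j, |A⁻¹ j j - 1| ≤ C * ε ^ 2 * r ^ 2) ∧
          (∀ j k, j ≠ k → |A⁻¹ j k| ≤ C * ε) := by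
  refine ⟨4, by norm_num, fun r _ ε hε hεr A _ hdiag hoff => ?_⟩
  have hcard : (Fintype.card (Fin r) : ℝ) * ε ≤ 1 / 2 := by
    rw [Fintype.card_fin]
    rw [le_div_iff₀ (by positivity)] at hεr
    linarith
  have hdet : IsUnit A.det :=
    isUnit_iff_ne_zero.2 (det_ne_zero_of_unit_diag hdiag hoff hε.le (by linarith))
  have hrows (j : Fin r) : A⁻¹ j ᵥ* A = Pi.single j 1 := by
    ext k
    rw [← mul_apply_eq_vecMul, nonsing_inv_mul A hdet, one_eq_pi_single]
  refine ⟨(isUnit_iff_isUnit_det A).2 hdet, fun j => ?_, fun j k hjk => ?_⟩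
  · calc |A⁻¹ j j - 1| ≤ 4 * ε ^ 2 * Fintype.card (Fin r) :=
          abs_sub_one_le_of_vecMul_eq_single hdiag hoff (hrows j) hε.le hcard
      _ ≤ 4 * ε ^ 2 * r ^ 2 := by
          rw [Fintype.card_fin]
          gcongr
          exact_mod_cast Nat.le_self_pow two_ne_zero r
  · exact abs_le_four_mul_of_vecMul_eq_single hdiag hoff (hrows j) hε.le hcard hjk.symm
end

section
/- The Bessel function of order zero, $J_0(z) = \sum_{m=0}^{\infty} (-1)^m (z/2)^{2m}/(m!)^2$, satisfies $|J_0(x)| \leq \exp(-x^2/4)$ for all real $x$ with $|x| \leq 1$. -/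
/-!
With `t = x² / 4` the series of `J₀(x)` is the alternating series `∑ (-1)^m t^m / (m!)²`, whose
terms decrease as soon as `t ≤ 1`. The alternating series bounds then give
`0 ≤ J₀(x) ≤ 1 - t + t²/4 = (1 - t/2)²`, and `0 ≤ 1 - t/2 ≤ exp(-t/2)` squares to
`(1 - t/2)² ≤ exp(-t)`.
-/

open Filter Nat Real

noncomputable def besselJ0 (z : ℝ) : ℝ :=
  ∑' m : ℕ, (-1) ^ m * (z / 2) ^ (2 * m) / (Nat.factorial m) ^ 2

lemma summable_pow_div_factorial_sq (t : ℝ) : Summable fun m : ℕ => t ^ m / (m ! : ℝ) ^ 2 := by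
  refine (summable_pow_div_factorial |t|).of_norm_bounded fun m => ?_
  have hm : (1 : ℝ) ≤ m ! := mod_cast one_le_iff_ne_zero.mpr (factorial_ne_zero m)
  rw [norm_div, norm_pow, norm_pow, Real.norm_eq_abs, Real.norm_natCast]
  exact div_le_div_of_nonneg_left (by positivity) (by positivity) (by nlinarith)

lemma antitone_pow_div_factorial_sq {t : ℝ} (ht₀ : 0 ≤ t) (ht₁ : t ≤ 1) :
    Antitone fun m : ℕ => t ^ m / (m ! : ℝ) ^ 2 := by
  refine antitone_nat_of_succ_le fun m => ?_
  have hm : (0 : ℝ) < m ! := mod_cast factorial_pos m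
  have hfac : (m ! : ℝ) ≤ (m + 1)! := mod_cast factorial_le m.le_succ
  exact div_le_div₀ (by positivity) (pow_le_pow_of_le_one ht₀ ht₁ m.le_succ) (by positivity)
    (by gcongr)

lemma hasSum_besselJ0 (x : ℝ) :
    HasSum (fun m : ℕ => (-1) ^ m * ((x ^ 2 / 4) ^ m / (m ! : ℝ) ^ 2)) (besselJ0 x) := by
  have hsum : Summable fun m : ℕ => (-1 : ℝ) ^ m * ((x ^ 2 / 4) ^ m / (m ! : ℝ) ^ 2) := by
    refine Summable.of_abs ?_
    simpa [abs_mul] using (summable_pow_div_factorial_sq (x ^ 2 / 4)).abs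
  convert hsum.hasSum using 1
  unfold besselJ0
  congr 1 with m
  rw [pow_mul, div_pow x 2 2]
  ring

lemma besselJ0_mem_Icc {x : ℝ} (hx : |x| ≤ 2) :
    besselJ0 x ∈ Set.Icc 0 ((1 - x ^ 2 / 8) ^ 2) := by
  have ht₁ : x ^ 2 / 4 ≤ 1 := by nlinarith [sq_abs x, abs_nonneg x]
  have hanti := antitone_pow_div_factorial_sq (by positivity) ht₁
  have htendsto := (hasSum_besselJ0 x).tendsto_sum_nat
  constructor
  · simpa using hanti.alternating_series_le_tendsto htendsto 0
  · refine (hanti.tendsto_le_alternating_series htendsto 1).trans_eq ?_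
    simp only [Finset.sum_range_succ, Finset.sum_range_zero, factorial, cast_one]
    ring

lemma sq_one_sub_le_exp {t : ℝ} (ht : t ≤ 1) : (1 - t) ^ 2 ≤ exp (-2 * t) := by
  calc (1 - t) ^ 2 ≤ exp (-t) ^ 2 := by
        gcongr
        linarith [add_one_le_exp (-t)]
    _ = exp (-2 * t) := by rw [← exp_nat_mul]; ring_nf

/-- `|J₀(x)| ≤ exp(-x²/4)` for all real `x` with `|x| ≤ 1`. -/
theorem stmt11 (x : ℝ) (hx : |x| ≤ 1) : |besselJ0 x| ≤ Real.exp (-x ^ 2 / 4) := by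
  obtain ⟨hJ₀, hJ₁⟩ := besselJ0_mem_Icc (hx.trans one_le_two)
  have hx₂ : x ^ 2 / 8 ≤ 1 := by nlinarith [sq_abs x, abs_nonneg x]
  calc |besselJ0 x| = besselJ0 x := abs_of_nonneg hJ₀
    _ ≤ (1 - x ^ 2 / 8) ^ 2 := hJ₁
    _ ≤ exp (-x ^ 2 / 4) := by
      convert sq_one_sub_le_exp hx₂ using 2
      ring
end
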